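/- arXiv:2006.11467 — 4 statements merged into one kernel-verified Lean document; each statement's English description precedes it below -/
import Mathlib

section
/- Suppose that for a finite set E of n points in ℝ² and every pair of nonzero reals (α₁, α₂), the number of hinges — triples (R₁, R₂, R₃) ∈ E³ with R₁·R₂ = α₁ and R₂·R₃ = α₂ — is at most H·n², and for every nonzero real α the number of pairs (A,B) ∈ E² with A·B = α is at most S·n^{4/3}. Then for every k ≥ 1 with k ≡ 2 (mod 3) and every k-tuple of nonzero reals (α₁,…,α_k), the number of k-chains — tuples (R₁,…,R_{k+1}) ∈ E^{k+1} with R_j·R_{j+1} = α_j for all 1 ≤ j ≤ k — is at most H^{(k+1)/3}·n^{2(k+1)/3}. -/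
/-- The standard dot product on ℝ². -/
def dot (A B : ℝ × ℝ) : ℝ := A.1 * B.1 + A.2 * B.2

/-- The set of k-chains of type τ in E: tuples of k+1 points of E whose consecutive
dot products are prescribed by τ. -/
def chains (E : Finset (ℝ × ℝ)) {k : ℕ} (τ : Fin k → ℝ) : Set (Fin (k + 1) → ℝ × ℝ) :=
  {R | (∀ i, R i ∈ E) ∧ ∀ j : Fin k, dot (R j.castSucc) (R j.succ) = τ j}

/-!
Cut a chain `(R₀, …, R_{3m+2})` into the `m + 1` consecutive triples `(R_{3i}, R_{3i+1}, R_{3i+2})`.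
Each triple is a hinge of type `(α_{3i}, α_{3i+1})` and the chain is recovered from its triples.
Forgetting the constraints `α_{3i+2}` that link consecutive triples, the number of chains is thus
at most a product of `m + 1` hinge counts, each at most `H n²`.
-/

theorem Set.ncard_univ_pi {ι : Type*} [Fintype ι] {X : ι → Type*} (T : ∀ i, Set (X i)) :
    (Set.univ.pi T).ncard = ∏ i, (T i).ncard := by
  rw [← Nat.card_coe_set_eq, Nat.card_congr (Equiv.Set.univPi T), Nat.card_pi]
  rfl

def hinges (E : Finset (ℝ × ℝ)) (α₁ α₂ : ℝ) : Set ((ℝ × ℝ) × (ℝ × ℝ) × (ℝ × ℝ)) :=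
  {t | t.1 ∈ E ∧ t.2.1 ∈ E ∧ t.2.2 ∈ E ∧ dot t.1 t.2.1 = α₁ ∧ dot t.2.1 t.2.2 = α₂}

theorem hinges_finite (E : Finset (ℝ × ℝ)) (α₁ α₂ : ℝ) : (hinges E α₁ α₂).Finite :=
  (E.finite_toSet.prod (E.finite_toSet.prod E.finite_toSet)).subset
    fun _ ⟨h₁, h₂, h₃, _⟩ => ⟨h₁, h₂, h₃⟩

def toTriples {X : Type*} {m : ℕ} (R : Fin (3 * m + 3) → X) (i : Fin (m + 1)) : X × X × X :=
  (R ⟨3 * i, by omega⟩, R ⟨3 * i + 1, by omega⟩, R ⟨3 * i + 2, by omega⟩)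

theorem toTriples_injective {X : Type*} {m : ℕ} :
    Function.Injective (toTriples : (Fin (3 * m + 3) → X) → Fin (m + 1) → X × X × X) := by
  intro R R' h
  funext j
  have hblock := congrFun h ⟨j / 3, by omega⟩
  simp only [toTriples, Prod.mk.injEq] at hblock
  obtain ⟨h₀, h₁, h₂⟩ := hblock
  have hj : j.val % 3 = 0 ∨ j.val % 3 = 1 ∨ j.val % 3 = 2 := by omega
  rcases hj with hj | hj | hj
  · convert h₀ using 2 <;> ext <;> dsimp only <;> omega
  · convert h₁ using 2 <;> ext <;> dsimp only <;> omega
  · convert h₂ using 2 <;> ext <;> dsimp only <;> omega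

theorem toTriples_mem_pi_hinges (E : Finset (ℝ × ℝ)) {m : ℕ} {α : Fin (3 * m + 2) → ℝ}
    {R : Fin (3 * m + 2 + 1) → ℝ × ℝ} (hR : R ∈ chains E α) :
    toTriples R ∈ Set.univ.pi fun i : Fin (m + 1) =>
      hinges E (α ⟨3 * i, by omega⟩) (α ⟨3 * i + 1, by omega⟩) :=
  fun i _ => ⟨hR.1 _, hR.1 _, hR.1 _, hR.2 ⟨3 * i, by omega⟩, hR.2 ⟨3 * i + 1, by omega⟩⟩

theorem ncard_chains_le_prod_hinges (E : Finset (ℝ × ℝ)) {m : ℕ} (α : Fin (3 * m + 2) → ℝ) :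
    (chains E α).ncard ≤
      ∏ i : Fin (m + 1), (hinges E (α ⟨3 * i, by omega⟩) (α ⟨3 * i + 1, by omega⟩)).ncard := by
  rw [← Set.ncard_univ_pi]
  exact Set.ncard_le_ncard_of_injOn toTriples (fun _ => toTriples_mem_pi_hinges E)
    toTriples_injective.injOn (Set.Finite.pi fun _ => hinges_finite E _ _)

theorem chains_bound_two_mod_three_general (E : Finset (ℝ × ℝ)) (H : ℝ)
    (hH : ∀ α₁ α₂ : ℝ, α₁ ≠ 0 → α₂ ≠ 0 →
      ({t : (ℝ × ℝ) × (ℝ × ℝ) × (ℝ × ℝ) | t.1 ∈ E ∧ t.2.1 ∈ E ∧ t.2.2 ∈ E ∧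
        dot t.1 t.2.1 = α₁ ∧ dot t.2.1 t.2.2 = α₂}.ncard : ℝ) ≤ H * (E.card : ℝ) ^ 2)
    (k : ℕ) (hk3 : k % 3 = 2) (α : Fin k → ℝ) (hα : ∀ j, α j ≠ 0) :
    ((chains E α).ncard : ℝ) ≤ H ^ ((k + 1) / 3) * (E.card : ℝ) ^ (2 * ((k + 1) / 3)) := by
  obtain ⟨m, rfl⟩ : ∃ m, k = 3 * m + 2 := ⟨k / 3, by omega⟩
  rw [show (3 * m + 2 + 1) / 3 = m + 1 by omega]
  calc ((chains E α).ncard : ℝ)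
      ≤ ∏ i : Fin (m + 1),
          ((hinges E (α ⟨3 * i, by omega⟩) (α ⟨3 * i + 1, by omega⟩)).ncard : ℝ) := by
        exact_mod_cast ncard_chains_le_prod_hinges E α
    _ ≤ ∏ _i : Fin (m + 1), H * (E.card : ℝ) ^ 2 :=
        Finset.prod_le_prod (fun _ _ => by positivity) fun _ _ => hH _ _ (hα _) (hα _)
    _ = H ^ (m + 1) * (E.card : ℝ) ^ (2 * (m + 1)) := by
        rw [Finset.prod_const, Finset.card_univ, Fintype.card_fin, mul_pow, pow_mul]

theorem chains_bound_two_mod_three (E : Finset (ℝ × ℝ)) (H S : ℝ)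
    (hH : ∀ α₁ α₂ : ℝ, α₁ ≠ 0 → α₂ ≠ 0 →
      ({t : (ℝ × ℝ) × (ℝ × ℝ) × (ℝ × ℝ) | t.1 ∈ E ∧ t.2.1 ∈ E ∧ t.2.2 ∈ E ∧
        dot t.1 t.2.1 = α₁ ∧ dot t.2.1 t.2.2 = α₂}.ncard : ℝ) ≤ H * (E.card : ℝ) ^ 2)
    (hS : ∀ α : ℝ, α ≠ 0 →
      ({p : (ℝ × ℝ) × (ℝ × ℝ) | p.1 ∈ E ∧ p.2 ∈ E ∧ dot p.1 p.2 = α}.ncard : ℝ) ≤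
        S * (E.card : ℝ) ^ ((4:ℝ)/3))
    (k : ℕ) (hk : 1 ≤ k) (hk3 : k % 3 = 2) (α : Fin k → ℝ) (hα : ∀ j, α j ≠ 0) :
    ((chains E α).ncard : ℝ) ≤ H ^ ((k + 1) / 3) * (E.card : ℝ) ^ (2 * ((k + 1) / 3)) :=
  chains_bound_two_mod_three_general E H hH k hk3 α hα
end

section
/- For every k ≥ 2 and every n sufficiently large (n ≥ 2k say), there exists a set E of n points in ℝ² and a k-tuple of nonzero real numbers (α₁,…,α_k) such that the number of k-chains of type (α₁,…,α_k) in E is at least c·n^{⌈(k+1)/2⌉} for a constant c > 0 depending only on k. -/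
theorem many_chains_construction (k : ℕ) (hk : 2 ≤ k) :
    ∃ c : ℝ, 0 < c ∧ ∀ n : ℕ, 2 * k ≤ n →
      ∃ (E : Finset (ℝ × ℝ)) (α : Fin k → ℝ),
        E.card = n ∧ (∀ j, α j ≠ 0) ∧
        c * (n : ℝ) ^ ((k + 2) / 2) ≤ ((chains E α).ncard : ℝ) := by
  refine ⟨(1/2 : ℝ) ^ ((k+2)/2), by positivity, fun n hn => ?_⟩
  set m := (k+1)/2 with hm
  have hmk : m ≤ k := by omega
  have hmn : 2*m ≤ n := by omega
  set A : Finset (ℝ×ℝ) := (Finset.range m).image (fun i : ℕ => ((i:ℝ)+1, (i:ℝ)+1)) with hA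
  set L : Finset (ℝ×ℝ) := (Finset.range (n-m)).image (fun t : ℕ => ((t:ℝ)+2, -(t:ℝ)-1)) with hL
  have hAcard : A.card = m := by
    rw [hA, Finset.card_image_of_injOn, Finset.card_range]
    intro a _ b _ h
    have : (a:ℝ) = b := by simpa using congrArg Prod.fst h
    exact_mod_cast this
  have hLcard : L.card = n - m := by
    rw [hL, Finset.card_image_of_injOn, Finset.card_range]
    intro a _ b _ h
    have : (a:ℝ) = b := by simpa using congrArg Prod.fst h
    exact_mod_cast this
  have hdisj : Disjoint A L := by
    rw [Finset.disjoint_left]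
    rintro x hx hx'
    rw [hA, Finset.mem_image] at hx
    rw [hL, Finset.mem_image] at hx'
    obtain ⟨i, _, rfl⟩ := hx
    obtain ⟨t, _, heq⟩ := hx'
    have h1 : (t:ℝ)+2 = (i:ℝ)+1 := congrArg Prod.fst heq
    have h2 : -(t:ℝ)-1 = (i:ℝ)+1 := congrArg Prod.snd heq
    have ht : (0:ℝ) ≤ (t:ℝ) := Nat.cast_nonneg t
    have hi : (0:ℝ) ≤ (i:ℝ) := Nat.cast_nonneg i
    linarith
  have hEcard : (A ∪ L).card = n := by
    rw [Finset.card_union_of_disjoint hdisj, hAcard, hLcard]; omega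
  have hLsum : ∀ x ∈ L, x.1 + x.2 = (1:ℝ) := by
    rintro x hx
    rw [hL, Finset.mem_image] at hx
    obtain ⟨t, _, rfl⟩ := hx
    simp; ring
  set α : Fin k → ℝ := fun j => (((j:ℕ)/2 : ℕ) : ℝ) + 1 with hα
  have hαpos : ∀ j, α j ≠ 0 := fun j => by positivity
  set F : (Fin ((k+2)/2) → ℝ×ℝ) → (Fin (k+1) → ℝ×ℝ) := fun g p =>
    if h : (p:ℕ) % 2 = 0 then g ⟨(p:ℕ)/2, by have := p.isLt; omega⟩
    else ((((p:ℕ)/2 : ℕ):ℝ)+1, (((p:ℕ)/2 : ℕ):ℝ)+1) with hF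
  have hanch : ∀ p : ℕ, p < m → ((((p : ℕ):ℝ))+1, (((p:ℕ)):ℝ)+1) ∈ A := by
    intro p hp
    rw [hA, Finset.mem_image]
    exact ⟨p, Finset.mem_range.mpr hp, rfl⟩
  -- membership of images of F in chains
  have hFmem : ∀ g, (∀ i, g i ∈ L) → F g ∈ chains (A ∪ L) α := by
    intro g hg
    constructor
    · intro p
      by_cases h : (p:ℕ) % 2 = 0
      · rw [hF]; simp only [dif_pos h]
        exact Finset.mem_union_right _ (hg _)
      · rw [hF]; simp only [dif_neg h]
        refine Finset.mem_union_left _ (hanch _ ?_)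
        have := p.isLt; omega
    · intro j
      have hcs : ((j.castSucc : Fin (k+1)) : ℕ) = (j:ℕ) := rfl
      have hsu : ((j.succ : Fin (k+1)) : ℕ) = (j:ℕ)+1 := rfl
      by_cases h : (j:ℕ) % 2 = 0
      · -- castSucc even → line point ; succ odd → anchor
        have h' : ¬ (((j:ℕ)+1) % 2 = 0) := by omega
        have e1 : F g j.castSucc = g ⟨(j:ℕ)/2, by have := j.isLt; omega⟩ := by
          rw [hF]; simp only [hcs, dif_pos h]
        have e2 : F g j.succ = (((((j:ℕ)+1)/2 : ℕ):ℝ)+1, ((((j:ℕ)+1)/2 : ℕ):ℝ)+1) := by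
          rw [hF]; simp only [hsu, dif_neg h']
        rw [e1, e2]
        set x := g ⟨(j:ℕ)/2, by have := j.isLt; omega⟩ with hx
        have hs := hLsum x (hg _)
        have hdiv : (((j:ℕ)+1)/2 : ℕ) = ((j:ℕ)/2 : ℕ) := by omega
        rw [hα]
        simp only [dot, hdiv]
        nlinarith [hs]
      · have h' : (((j:ℕ)+1) % 2 = 0) := by omega
        have e1 : F g j.castSucc = (((((j:ℕ))/2 : ℕ):ℝ)+1, ((((j:ℕ))/2 : ℕ):ℝ)+1) := by
          rw [hF]; simp only [hcs, dif_neg h]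
        have e2 : F g j.succ = g ⟨((j:ℕ)+1)/2, by have := j.isLt; omega⟩ := by
          rw [hF]; simp only [hsu, dif_pos h']
        rw [e1, e2]
        set x := g ⟨((j:ℕ)+1)/2, by have := j.isLt; omega⟩ with hx
        have hs := hLsum x (hg _)
        rw [hα]
        simp only [dot]
        nlinarith [hs]
  have hFinj : Function.Injective F := by
    intro g g' h
    funext i
    have hlt : 2*(i:ℕ) < k+1 := by have := i.isLt; omega
    have h2 : F g ⟨2*(i:ℕ), hlt⟩ = F g' ⟨2*(i:ℕ), hlt⟩ := by rw [h]
    have e : ∀ g0 : Fin ((k+2)/2) → ℝ×ℝ, F g0 ⟨2*(i:ℕ), hlt⟩ = g0 i := by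
      intro g0
      rw [hF]
      have hev : (2*(i:ℕ)) % 2 = 0 := by omega
      simp only [dif_pos hev]
      congr 1
      ext
      simp only []
      omega
    rw [e g, e g'] at h2
    exact h2
  -- finiteness of chains
  have hfin : (chains (A ∪ L) α).Finite := by
    apply Set.Finite.subset (Set.Finite.pi (fun _ : Fin (k+1) => (A ∪ L).finite_toSet))
    intro R hR
    rw [Set.mem_pi]
    exact fun i _ => hR.1 i
  -- counting
  set D : Finset (Fin ((k+2)/2) → ℝ×ℝ) := Fintype.piFinset (fun _ => L) with hD
  have hDcard : D.card = (n-m) ^ ((k+2)/2) := by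
    rw [hD, Fintype.card_piFinset]
    simp [hLcard]
  have hsub : ↑(D.image F) ⊆ chains (A ∪ L) α := by
    intro R hR
    rw [Finset.coe_image, Set.mem_image] at hR
    obtain ⟨g, hg, rfl⟩ := hR
    refine hFmem g ?_
    intro i
    rw [hD] at hg
    exact (Fintype.mem_piFinset.mp (Finset.mem_coe.mp hg)) i
  have hcount : (n-m) ^ ((k+2)/2) ≤ (chains (A ∪ L) α).ncard := by
    calc (n-m) ^ ((k+2)/2) = (D.image F).card := by
          rw [Finset.card_image_of_injective _ hFinj, hDcard]
      _ = (↑(D.image F) : Set (Fin (k+1) → ℝ×ℝ)).ncard := (Set.ncard_coe_finset _).symm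
      _ ≤ (chains (A ∪ L) α).ncard := Set.ncard_le_ncard hsub hfin
  refine ⟨A ∪ L, α, hEcard, hαpos, ?_⟩
  have hhalf : (1/2 : ℝ) * n ≤ ((n - m : ℕ) : ℝ) := by
    rw [Nat.cast_sub (by omega)]
    have : (2*m : ℕ) ≤ (n:ℕ) := hmn
    have : ((2*m : ℕ) : ℝ) ≤ ((n:ℕ) : ℝ) := Nat.cast_le.mpr this
    push_cast at this ⊢
    linarith
  have hnn : (0:ℝ) ≤ (1/2 : ℝ) * n := by positivity
  calc (1/2 : ℝ)^((k+2)/2) * (n:ℝ)^((k+2)/2)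
      = ((1/2 : ℝ) * n)^((k+2)/2) := (mul_pow _ _ _).symm
    _ ≤ (((n - m : ℕ):ℝ))^((k+2)/2) := pow_le_pow_left₀ hnn hhalf _
    _ = (((n-m) ^ ((k+2)/2) : ℕ) : ℝ) := by push_cast; ring
    _ ≤ ((chains (A ∪ L) α).ncard : ℝ) := Nat.cast_le.mpr hcount
end

section
/- For every k ≥ 1 and every even n ≥ 2, there exists a set E of n points in ℝ² such that the number of tuples (R₁,…,R_{k+1}) ∈ E^{k+1} with R_j · R_{j+1} = 0 for all 1 ≤ j ≤ k is at least (n/2)^{k+1}. -/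
def zeroChains (E : Finset (ℝ × ℝ)) (k : ℕ) : Set (Fin (k + 1) → ℝ × ℝ) :=
  {R | (∀ i, R i ∈ E) ∧ ∀ j : Fin k, dot (R j.castSucc) (R j.succ) = 0}

lemma dot_comm (A B : ℝ × ℝ) : dot A B = dot B A := by
  simp only [dot, mul_comm]

lemma zeroChains_finite (E : Finset (ℝ × ℝ)) (k : ℕ) : (zeroChains E k).Finite :=
  (Fintype.piFinset fun _ => E).finite_toSet.subset fun R hR => by
    simpa using hR.1

lemma piFinset_alternating_subset_zeroChains {X Y : Finset (ℝ × ℝ)}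
    (horth : ∀ x ∈ X, ∀ y ∈ Y, dot x y = 0) (k : ℕ) :
    ↑(Fintype.piFinset fun i : Fin (k + 1) => if Even (i : ℕ) then X else Y) ⊆
      zeroChains (X ∪ Y) k := by
  intro R hR
  rw [Finset.mem_coe, Fintype.mem_piFinset] at hR
  refine ⟨fun i => ?_, fun j => ?_⟩
  · have := hR i
    split_ifs at this <;> simp [this]
  · have hc := hR j.castSucc
    have hs := hR j.succ
    simp only [Fin.val_castSucc, Fin.val_succ, Nat.even_add_one] at hc hs
    by_cases hj : Even (j : ℕ)
    · simp only [hj, if_true, not_true_eq_false, if_false] at hc hs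
      exact horth _ hc _ hs
    · simp only [hj, if_false, not_false_eq_true, if_true] at hc hs
      rw [dot_comm]
      exact horth _ hs _ hc

lemma pow_le_ncard_zeroChains_union {X Y : Finset (ℝ × ℝ)} {m : ℕ} (hX : X.card = m)
    (hY : Y.card = m) (horth : ∀ x ∈ X, ∀ y ∈ Y, dot x y = 0) (k : ℕ) :
    m ^ (k + 1) ≤ (zeroChains (X ∪ Y) k).ncard := by
  have hcard : (Fintype.piFinset fun i : Fin (k + 1) =>
      if Even (i : ℕ) then X else Y).card = m ^ (k + 1) := by
    rw [Fintype.card_piFinset]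
    simp [apply_ite Finset.card, hX, hY]
  rw [← hcard, ← Set.ncard_coe_finset]
  exact Set.ncard_le_ncard (piFinset_alternating_subset_zeroChains horth k)
    (zeroChains_finite _ k)

open Function.Embedding in
lemma dot_map_sectL_map_sectR (s t : Finset ℝ) :
    ∀ x ∈ s.map (sectL ℝ 0), ∀ y ∈ t.map (sectR 0 ℝ), dot x y = 0 := by
  simp [dot]

open Function.Embedding in
lemma card_map_sectL_union_map_sectR {s : Finset ℝ} (hs : (0 : ℝ) ∉ s) :
    (s.map (sectL ℝ 0) ∪ s.map (sectR 0 ℝ)).card = s.card + s.card := by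
  have hdisj : Disjoint (s.map (sectL ℝ 0)) (s.map (sectR 0 ℝ)) := by
    simp only [Finset.disjoint_left, Finset.mem_map, sectL_apply, sectR_apply, not_exists,
      not_and]
    rintro _ ⟨a, ha, rfl⟩ b _ hb
    obtain rfl : a = 0 := (Prod.ext_iff.mp hb).1.symm
    exact hs ha
  rw [Finset.card_union_of_disjoint hdisj, Finset.card_map, Finset.card_map]

theorem many_zero_chains_construction_general (k : ℕ) (n : ℕ)
    (heven : Even n) :
    ∃ E : Finset (ℝ × ℝ), E.card = n ∧
      (n / 2) ^ (k + 1) ≤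
        {R : Fin (k + 1) → ℝ × ℝ | (∀ i, R i ∈ E) ∧
          ∀ j : Fin k, dot (R j.castSucc) (R j.succ) = 0}.ncard := by
  obtain ⟨m, rfl⟩ := heven
  set s : Finset ℝ := (Finset.Icc 1 m).map Nat.castEmbedding
  have hs_card : s.card = m := by simp [s]
  have hs_zero : (0 : ℝ) ∉ s := by simp [s]
  refine ⟨s.map (.sectL ℝ 0) ∪ s.map (.sectR 0 ℝ),
    by rw [card_map_sectL_union_map_sectR hs_zero, hs_card], ?_⟩
  rw [show (m + m) / 2 = m by omega]
  exact pow_le_ncard_zeroChains_union (by rw [Finset.card_map, hs_card])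
    (by rw [Finset.card_map, hs_card]) (dot_map_sectL_map_sectR s s) k

theorem many_zero_chains_construction (k : ℕ) (hk : 1 ≤ k) (n : ℕ) (hn : 2 ≤ n)
    (heven : Even n) :
    ∃ E : Finset (ℝ × ℝ), E.card = n ∧
      (n / 2) ^ (k + 1) ≤
        {R : Fin (k + 1) → ℝ × ℝ | (∀ i, R i ∈ E) ∧
          ∀ j : Fin k, dot (R j.castSucc) (R j.succ) = 0}.ncard :=
  many_zero_chains_construction_general k n heven
end

section
/- For every k ≥ 1, every k-tuple of nonzero reals (α₁,…,α_k), and every n divisible by k+1, there exists a set E of n points in ℝ³ such that the number of k-chains of type (α₁,…,α_k) in E (tuples (R₁,…,R_{k+1}) ∈ E^{k+1} with R_j·R_{j+1} = α_j for all j) is at least (n/(k+1))^{k+1}. -/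
/-- The standard dot product on ℝ³. -/
def dot3 (A B : ℝ × ℝ × ℝ) : ℝ := A.1 * B.1 + A.2.1 * B.2.1 + A.2.2 * B.2.2

/-!
Put `m` points on each of `k + 1` lines `L₀, …, L_k`, where `L_j` has constant first coordinate
`c_j`, and its free coordinate is `z` for even `j` and `y` for odd `j`. Then any point of `L_j`
dotted with any point of `L_{j+1}` gives `c_j c_{j+1}`, which is made equal to `α_j` by choosing
`c₀ = 1`, `c_{j+1} = α_j / c_j`. Every choice of one point per line is then a chain, so there are
`m ^ (k + 1)` of them.
-/

open Finset

section Chains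

variable {X : Type*} {k : ℕ}

def chainSet (E : Finset X) (r : Fin k → X → X → Prop) : Set (Fin (k + 1) → X) :=
  {R | (∀ i, R i ∈ E) ∧ ∀ j : Fin k, r j (R j.castSucc) (R j.succ)}

theorem chainSet_finite (E : Finset X) (r : Fin k → X → X → Prop) : (chainSet E r).Finite :=
  (Fintype.piFinset fun _ => E).finite_toSet.subset fun _ hR => Fintype.mem_piFinset.2 hR.1

theorem prod_card_le_ncard_chainSet {E : Finset X} {r : Fin k → X → X → Prop}
    (L : Fin (k + 1) → Finset X) (hLE : ∀ i, L i ⊆ E)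
    (hL : ∀ j : Fin k, ∀ a ∈ L j.castSucc, ∀ b ∈ L j.succ, r j a b) :
    ∏ i, (L i).card ≤ (chainSet E r).ncard := by
  rw [← Fintype.card_piFinset, ← Set.ncard_coe_finset]
  refine Set.ncard_le_ncard (fun R hR => ?_) (chainSet_finite E r)
  rw [Finset.mem_coe, Fintype.mem_piFinset] at hR
  exact ⟨fun i => hLE i (hR i), fun j => hL j _ (hR _) _ (hR _)⟩

theorem pow_le_ncard_chainSet_image [DecidableEq X] {m : ℕ} {r : Fin k → X → X → Prop}
    {P : Fin (k + 1) × Fin m → X} (hP : Function.Injective P)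
    (hr : ∀ (j : Fin k) (s t : Fin m), r j (P (j.castSucc, s)) (P (j.succ, t))) :
    m ^ (k + 1) ≤ (chainSet (univ.image P) r).ncard := by
  let L : Fin (k + 1) → Finset X := fun i => univ.image (P ∘ Prod.mk i)
  have hL : ∀ i, (L i).card = m := fun i => by
    rw [card_image_of_injective _ (hP.comp (Prod.mk_right_injective i)), card_univ,
      Fintype.card_fin]
  calc m ^ (k + 1) = ∏ i, (L i).card := by simp [hL]
    _ ≤ _ := by
      refine prod_card_le_ncard_chainSet L (fun i => ?_) ?_
      · exact image_subset_iff.2 fun t _ => mem_image_of_mem _ (mem_univ _)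
      · simpa [L] using hr

end Chains

namespace AlternatingLines

variable (β : ℕ → ℝ)

noncomputable def lineOffset : ℕ → ℝ
  | 0 => 1
  | j + 1 => β j / lineOffset j

variable {β}

theorem lineOffset_ne_zero (hβ : ∀ j, β j ≠ 0) (j : ℕ) : lineOffset β j ≠ 0 := by
  induction j with
  | zero => exact one_ne_zero
  | succ j ih => exact div_ne_zero (hβ j) ih

theorem lineOffset_mul_lineOffset_succ (hβ : ∀ j, β j ≠ 0) (j : ℕ) :
    lineOffset β j * lineOffset β (j + 1) = β j :=
  mul_div_cancel₀ (β j) (lineOffset_ne_zero hβ j)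

variable (β)

noncomputable def linePoint (j : ℕ) (s : ℝ) : ℝ × ℝ × ℝ :=
  (lineOffset β j, if Even j then 0 else s, if Even j then s else 0)

variable {β}

theorem dot3_linePoint_succ (hβ : ∀ j, β j ≠ 0) (j : ℕ) (s t : ℝ) :
    dot3 (linePoint β j s) (linePoint β (j + 1) t) = β j := by
  rcases Nat.even_or_odd j with hj | hj
  · simp [dot3, linePoint, hj, Nat.even_add_one, lineOffset_mul_lineOffset_succ hβ]
  · simp [dot3, linePoint, Nat.not_even_iff_odd.2 hj, Nat.even_add_one,
      lineOffset_mul_lineOffset_succ hβ]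

theorem linePoint_snd_fst_add_snd_snd (j : ℕ) (s : ℝ) :
    (linePoint β j s).2.1 + (linePoint β j s).2.2 = s := by
  unfold linePoint; split_ifs <;> simp

variable (β)

/-- The free coordinates are pairwise distinct, so points on lines that happen to coincide
stay distinct. -/
noncomputable def gridPoint {k m : ℕ} (p : Fin (k + 1) × Fin m) : ℝ × ℝ × ℝ :=
  linePoint β p.1 (finProdFinEquiv p : ℕ)

theorem gridPoint_injective {k m : ℕ} : Function.Injective (gridPoint β (k := k) (m := m)) := by
  intro p q h
  have hs := congrArg (fun P : ℝ × ℝ × ℝ => P.2.1 + P.2.2) h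
  simp only [gridPoint, linePoint_snd_fst_add_snd_snd, Nat.cast_inj, Fin.val_inj] at hs
  exact finProdFinEquiv.injective hs

variable {β}

theorem dot3_gridPoint_succ (hβ : ∀ j, β j ≠ 0) {k m : ℕ} (j : Fin k) (s t : Fin m) :
    dot3 (gridPoint β (j.castSucc, s)) (gridPoint β (j.succ, t)) = β j :=
  dot3_linePoint_succ hβ j _ _

end AlternatingLines

open AlternatingLines in
theorem many_chains_construction_3d_general (k : ℕ) (α : Fin k → ℝ)
    (hα : ∀ j, α j ≠ 0) (n : ℕ) (hdvd : (k + 1) ∣ n) :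
    ∃ E : Finset (ℝ × ℝ × ℝ), E.card = n ∧
      (n / (k + 1)) ^ (k + 1) ≤
        {R : Fin (k + 1) → ℝ × ℝ × ℝ | (∀ i, R i ∈ E) ∧
          ∀ j : Fin k, dot3 (R j.castSucc) (R j.succ) = α j}.ncard := by
  obtain ⟨m, rfl⟩ := hdvd
  set β : ℕ → ℝ := fun j => if h : j < k then α ⟨j, h⟩ else 1
  have hβ : ∀ j, β j ≠ 0 := fun j => by
    by_cases h : j < k <;> simp [β, h, hα]
  have hinj := gridPoint_injective β (k := k) (m := m)
  refine ⟨univ.image (gridPoint β), by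
    rw [card_image_of_injective _ hinj, card_univ, Fintype.card_prod, Fintype.card_fin,
      Fintype.card_fin], ?_⟩
  rw [Nat.mul_div_cancel_left m k.succ_pos]
  refine pow_le_ncard_chainSet_image (r := fun j a b => dot3 a b = α j) hinj fun j s t =>
    (dot3_gridPoint_succ hβ j s t).trans (dif_pos j.isLt)

theorem many_chains_construction_3d (k : ℕ) (hk : 1 ≤ k) (α : Fin k → ℝ)
    (hα : ∀ j, α j ≠ 0) (n : ℕ) (hdvd : (k + 1) ∣ n) :
    ∃ E : Finset (ℝ × ℝ × ℝ), E.card = n ∧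
      (n / (k + 1)) ^ (k + 1) ≤
        {R : Fin (k + 1) → ℝ × ℝ × ℝ | (∀ i, R i ∈ E) ∧
          ∀ j : Fin k, dot3 (R j.castSucc) (R j.succ) = α j}.ncard :=
  many_chains_construction_3d_general k α hα n hdvd
end
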